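/- There is no strict linear order < on the underlying set of M₀ such that the expanded structure (M₀, <) is ultrahomogeneous and the age of (M₀, <) has the Ramsey property. -/

import Mathlib

open FirstOrder Language Structure CategoryTheory

/-- The language `L₀` with a `2n`-ary relation symbol `E_n` for each `n ≥ 1`. -/
def L₀ : FirstOrder.Language where
  Functions := fun _ => Empty
  Relations := fun k => {n : ℕ // 0 < n ∧ k = n + n}

/-- The relation symbol `E_n`. -/
def Esymb (n : ℕ) (hn : 0 < n) : L₀.Relations (n + n) := ⟨n, hn, rfl⟩

/-- `E_n(x̄, ȳ)` in an `L₀`-structure. -/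
def ERel (M : Type*) [L₀.Structure M] (n : ℕ) (hn : 0 < n) (x y : Fin n → M) : Prop :=
  Structure.RelMap (Esymb n hn) (Fin.append x y)

/-- The defining conditions for membership in `K₀`: each `E_n` holds only on pairs of
injective `n`-tuples, is invariant under permuting the entries of each tuple separately,
and induces an equivalence relation on `n`-element subsets. -/
def IsK0Struct (C : Type*) [L₀.Structure C] : Prop :=
  ∀ (n : ℕ) (hn : 0 < n),
    (∀ x y : Fin n → C, ERel C n hn x y → Function.Injective x ∧ Function.Injective y) ∧
    (∀ (x y : Fin n → C) (σ τ : Equiv.Perm (Fin n)),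
        ERel C n hn x y → ERel C n hn (x ∘ σ) (y ∘ τ)) ∧
    (∀ x : Fin n → C, Function.Injective x → ERel C n hn x x) ∧
    (∀ x y : Fin n → C, ERel C n hn x y → ERel C n hn y x) ∧
    (∀ x y z : Fin n → C, ERel C n hn x y → ERel C n hn y z → ERel C n hn x z)

/-- The class `K₀` of finite `L₀`-structures as above. -/
def K₀ : Set (Bundled L₀.Structure) := {C | Finite C ∧ IsK0Struct C}

/-- A language with a single binary relation symbol (for a linear order). -/
def Lord : FirstOrder.Language where
  Functions := fun _ => Empty
  Relations := fun k => PLift (k = 2)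

/-- Interpret the binary relation symbol of `Lord` by a given relation `r`. -/
def ordStructure (M : Type*) (r : M → M → Prop) : Lord.Structure M where
  funMap := fun f => f.elim
  RelMap := fun {k} R v => r (v (Fin.cast R.down.symm 0)) (v (Fin.cast R.down.symm 1))

/-- The language of `L₀` together with one extra binary relation symbol `<`. -/
abbrev L₀lt : FirstOrder.Language := L₀.sum Lord

/-- The expansion of an `L₀`-structure by the binary relation `r`. -/
def expStr (M : Type*) [L₀.Structure M] (r : M → M → Prop) : L₀lt.Structure M :=
  @Language.sumStructure L₀ Lord M _ (ordStructure M r)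

/-- The Ramsey property for a class `K` of finite structures: for all `A, B ∈ K` and
`k ≥ 1` there is `C ∈ K` such that every `k`-coloring of the copies of `A` in `C` is
monochromatic on the copies of `A` inside some copy `B'` of `B` in `C`. -/
def RamseyProperty {L : FirstOrder.Language} (K : Set (Bundled L.Structure)) : Prop :=
  ∀ A B : Bundled L.Structure, A ∈ K → B ∈ K → ∀ k : ℕ, 0 < k →
    ∃ C : Bundled L.Structure, C ∈ K ∧
      ∀ χ : {S : L.Substructure C // Nonempty (S ≃[L] A)} → Fin k,
        ∃ B' : L.Substructure C, Nonempty (B' ≃[L] B) ∧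
          ∀ S T : {S : L.Substructure C // Nonempty (S ≃[L] A)},
            S.1 ≤ B' → T.1 ≤ B' → χ S = χ T

/-!
Write `orderedFin m` for `Fin m` ordered naturally, with `E_n(x̄, ȳ)` holding when `x̄, ȳ` are
injective with equal or disjoint ranges; for `m ≤ 4` this lies in `K₀`, and since it is invariant
under permutations, every strict linear order on `M₀` realises it in increasing order. Suppose the
ordered age had the Ramsey property and let `C` witness it for `A = orderedFin 3`,
`B = orderedFin 4` and two colours. Fix a well-order on `E₂`-classes of pairs of `C` and colour an
increasing triple `a < b < c` by whether the class of `{a, b}` precedes that of `{a, c}`. In a copy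
`p₀ < p₁ < p₂ < p₃` of `B` the `E₂`-classes are the three perfect matchings, so the triples
`p₀p₂p₃` and `p₁p₂p₃` compare the same two distinct classes `{p₀p₂} = {p₁p₃}` and
`{p₀p₃} = {p₁p₂}` in opposite orders and receive different colours.
-/

open Set Function

instance : L₀.IsRelational := fun _ => inferInstanceAs (IsEmpty Empty)

instance : Lord.IsRelational := fun _ => inferInstanceAs (IsEmpty Empty)

lemma Fin.comp_append {α β : Type*} (f : α → β) {m n : ℕ} (x : Fin m → α) (y : Fin n → α) :
    f ∘ Fin.append x y = Fin.append (f ∘ x) (f ∘ y) := by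
  funext i
  refine Fin.addCases (fun j => ?_) (fun j => ?_) i <;> simp

def EqOrDisjoint {V : Type*} {n : ℕ} (x y : Fin n → V) : Prop :=
  Injective x ∧ Injective y ∧ (range x = range y ∨ Disjoint (range x) (range y))

lemma eqOrDisjoint_comp_iff {V W : Type*} {f : V → W} (hf : Injective f) {n : ℕ} (x y : Fin n → V) :
    EqOrDisjoint (f ∘ x) (f ∘ y) ↔ EqOrDisjoint x y := by
  unfold EqOrDisjoint
  rw [hf.of_comp_iff, hf.of_comp_iff, range_comp, range_comp, image_eq_image hf,
    disjoint_image_iff hf]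

lemma range_eq_or_disjoint_of_subsingleton {ι V : Type*} [Subsingleton ι] (x z : ι → V) :
    range x = range z ∨ Disjoint (range x) (range z) := by
  refine or_iff_not_imp_right.2 fun h => ?_
  obtain ⟨_, ⟨i, rfl⟩, ⟨j, hj⟩⟩ := not_disjoint_iff.1 h
  congr 1
  funext k
  rw [Subsingleton.elim k i, ← hj, Subsingleton.elim j i]

lemma range_eq_compl_of_disjoint {V : Type*} [Finite V] {n : ℕ} (hV : Nat.card V ≤ 2 * n)
    {x y : Fin n → V} (hx : Injective x) (hy : Injective y) (h : Disjoint (range x) (range y)) :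
    range x = (range y)ᶜ := by
  refine eq_of_subset_of_ncard_le (subset_compl_iff_disjoint_right.2 h) ?_
  rw [ncard_compl, ncard_range_of_injective hx, ncard_range_of_injective hy, Nat.card_fin]
  omega

-- Two disjoint `n`-sets in a set of at most four points are complementary once `n ≥ 2`.
lemma EqOrDisjoint.trans {V : Type*} [Finite V] (hV : Nat.card V ≤ 4) {n : ℕ} {x y z : Fin n → V}
    (hxy : EqOrDisjoint x y) (hyz : EqOrDisjoint y z) : EqOrDisjoint x z := by
  obtain ⟨hx, hy, hxy | hxy⟩ := hxy <;> obtain ⟨-, hz, hyz | hyz⟩ := hyz <;> refine ⟨hx, hz, ?_⟩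
  · exact .inl (hxy.trans hyz)
  · exact .inr (hxy ▸ hyz)
  · exact .inr (hyz ▸ hxy)
  · rcases Nat.lt_or_ge n 2 with hn | hn
    · have : Subsingleton (Fin n) := Fin.subsingleton_iff_le_one.2 (by omega)
      exact range_eq_or_disjoint_of_subsingleton x z
    · refine .inl ?_
      rw [range_eq_compl_of_disjoint (by omega) hx hy hxy,
        range_eq_compl_of_disjoint (by omega) hz hy hyz.symm]

@[reducible]
def eqOrDisjointStr (V : Type*) : L₀.Structure V where
  funMap := fun f => f.elim
  RelMap := fun {_} R v =>
    EqOrDisjoint (fun i => v (Fin.cast R.2.2.symm (Fin.castAdd R.1 i)))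
      (fun i => v (Fin.cast R.2.2.symm (Fin.natAdd R.1 i)))

lemma erel_eqOrDisjointStr_iff {V : Type*} {n : ℕ} (hn : 0 < n) (x y : Fin n → V) :
    @ERel V (eqOrDisjointStr V) n hn x y ↔ EqOrDisjoint x y := by
  show EqOrDisjoint _ _ ↔ _
  simp only [Esymb, Fin.cast_eq_self, Fin.append_left, Fin.append_right]

lemma isK0Struct_eqOrDisjointStr {V : Type*} [Finite V] (hV : Nat.card V ≤ 4) :
    @IsK0Struct V (eqOrDisjointStr V) := by
  intro n hn
  simp only [erel_eqOrDisjointStr_iff]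
  refine ⟨fun x y h => ⟨h.1, h.2.1⟩, fun x y σ τ h => ?_, fun x hx => ⟨hx, hx, .inl rfl⟩,
    fun x y h => ⟨h.2.1, h.1, h.2.2.imp Eq.symm fun h => h.symm⟩,
    fun x y z => EqOrDisjoint.trans hV⟩
  obtain ⟨hx, hy, h⟩ := h
  exact ⟨hx.comp σ.injective, hy.comp τ.injective, by
    rwa [σ.surjective.range_comp, τ.surjective.range_comp]⟩

def eqOrDisjointEmbedding {V W : Type*} (f : V ↪ W) :
    @Embedding L₀ V W (eqOrDisjointStr V) (eqOrDisjointStr W) :=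
  @Embedding.mk L₀ V W (eqOrDisjointStr V) (eqOrDisjointStr W) f (fun {_} g => g.elim)
    (fun {_} _ _ => eqOrDisjoint_comp_iff f.injective _ _)

def expStrEmbedding {A M : Type*} [L₀.Structure A] [L₀.Structure M] {rA : A → A → Prop}
    {rM : M → M → Prop} (f : A ↪[L₀] M) (hf : ∀ a b, rM (f a) (f b) ↔ rA a b) :
    @Embedding L₀lt A M (expStr A rA) (expStr M rM) :=
  @Embedding.mk L₀lt A M (expStr A rA) (expStr M rM) f.toEmbedding
    (fun {_} g => by rcases g with g | g <;> exact g.elim)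
    (fun {_} R x => by
      rcases R with R | R
      · exact f.map_rel R x
      · obtain ⟨rfl⟩ : PLift (_ = 2) := R
        exact hf _ _)

def orderedFin (m : ℕ) : Bundled L₀lt.Structure :=
  ⟨Fin m, @expStr (Fin m) (eqOrDisjointStr _) (· < ·)⟩

def orderedFinEmbedding {m k : ℕ} (ι : Fin m ↪o Fin k) :
    orderedFin m ↪[L₀lt] orderedFin k :=
  @expStrEmbedding (Fin m) (Fin k) (eqOrDisjointStr _) (eqOrDisjointStr _) _ _
    (eqOrDisjointEmbedding ι.toEmbedding) fun _ _ => ι.lt_iff_lt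

lemma orderedFin_mem_age {M : Type} [L₀.Structure M] (hage : L₀.age M = K₀)
    {r : M → M → Prop} [IsStrictTotalOrder M r] {m : ℕ} (hm : m ≤ 4) :
    orderedFin m ∈ @age L₀lt M (expStr M r) := by
  classical
  let := eqOrDisjointStr (Fin m)
  have hK : (⟨Fin m, eqOrDisjointStr (Fin m)⟩ : Bundled L₀.Structure) ∈ L₀.age M :=
    hage ▸ ⟨inferInstance, isK0Struct_eqOrDisjointStr (by simpa using hm)⟩
  obtain ⟨e⟩ : Nonempty (Fin m ↪[L₀] M) := hK.2
  let : LinearOrder M := linearOrderOfSTO r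
  let σ := Tuple.sort (e : Fin m → M)
  have hσ : StrictMono (e ∘ σ) :=
    (Tuple.monotone_sort _).strictMono_of_injective (e.injective.comp σ.injective)
  have : Finite (orderedFin m) := inferInstanceAs (Finite (Fin m))
  exact ⟨Structure.FG.of_finite,
    ⟨@expStrEmbedding (Fin m) M (eqOrDisjointStr _) _ _ _
      (e.comp (eqOrDisjointEmbedding σ.toEmbedding)) fun _ _ => hσ.lt_iff_lt⟩⟩

def FirstOrder.Language.Embedding.rangeCopy {L : Language} {A : Bundled L.Structure} {C : Type*}
    [L.Structure C] (f : A ↪[L] C) : {S : L.Substructure C // Nonempty (S ≃[L] A)} :=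
  ⟨f.toHom.range, ⟨f.equivRange.symm⟩⟩

section OrderedK₀

variable {M N C : Type*} [L₀lt.Structure M] [L₀lt.Structure N] [L₀lt.Structure C]

def ordSymb : L₀lt.Relations 2 := Sum.inr ⟨rfl⟩

variable (C) in
def OrdRel (a b : C) : Prop := RelMap ordSymb ![a, b]

def PairRel (x y : Fin 2 → C) : Prop :=
  @ERel C ((LHom.sumInl : L₀ →ᴸ L₀lt).reduct C) 2 two_pos x y

def pairClass (x : Fin 2 → C) : Set (Fin 2 → C) := {y | PairRel x y}

lemma ordRel_orderedFin_iff {m : ℕ} (i j : Fin m) : OrdRel (orderedFin m) i j ↔ i < j :=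
  Iff.rfl

lemma pairRel_orderedFin_iff {m : ℕ} (x y : Fin 2 → Fin m) :
    PairRel (C := orderedFin m) x y ↔ EqOrDisjoint x y :=
  erel_eqOrDisjointStr_iff two_pos x y

lemma pairClass_eq_iff (hK : @IsK0Struct C ((LHom.sumInl : L₀ →ᴸ L₀lt).reduct C)) {x y : Fin 2 → C}
    (hy : Injective y) : pairClass x = pairClass y ↔ PairRel x y := by
  obtain ⟨-, -, hrefl, hsymm, htrans⟩ := hK 2 two_pos
  refine ⟨fun h => show y ∈ pairClass x from h ▸ hrefl y hy, fun h => ?_⟩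
  ext z
  exact ⟨htrans _ _ _ (hsymm _ _ h), htrans _ _ _ h⟩

namespace FirstOrder.Language.Embedding

lemma ordRel_iff (f : M ↪[L₀lt] N) (a b : M) : OrdRel N (f a) (f b) ↔ OrdRel M a b := by
  have h := f.map_rel ordSymb ![a, b]
  rw [← FinVec.map_eq] at h
  exact h

lemma pairRel_iff (f : M ↪[L₀lt] N) (a b c d : M) :
    PairRel ![f a, f b] ![f c, f d] ↔ PairRel ![a, b] ![c, d] := by
  have h := f.map_rel (Sum.inl (Esymb 2 two_pos) : L₀lt.Relations (2 + 2))
    (Fin.append ![a, b] ![c, d])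
  rw [Fin.comp_append, ← FinVec.map_eq, ← FinVec.map_eq] at h
  exact h

lemma coe_eq_of_range_eq [IsStrictTotalOrder C (OrdRel C)] {m : ℕ}
    {f g : orderedFin m ↪[L₀lt] C} (h : range f = range g) : ⇑f = ⇑g := by
  classical
  let := linearOrderOfSTO (OrdRel C)
  have hmono : ∀ f : orderedFin m ↪[L₀lt] C, StrictMono (α := Fin m) f := fun f i j hij =>
    (f.ordRel_iff i j).2 ((ordRel_orderedFin_iff i j).2 hij)
  exact ((hmono f).range_inj (hmono g)).1 h

end FirstOrder.Language.Embedding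

open Classical in
noncomputable def triangleColouring
    (S : {S : L₀lt.Substructure C // Nonempty (S ≃[L₀lt] orderedFin 3)}) : Fin 2 :=
  let t : orderedFin 3 ↪[L₀lt] C := S.1.subtype.comp S.2.some.symm.toEmbedding
  if WellOrderingRel (pairClass ![t (0 : Fin 3), t (1 : Fin 3)])
    (pairClass ![t (0 : Fin 3), t (2 : Fin 3)]) then 0 else 1

open Classical in
lemma triangleColouring_rangeCopy [IsStrictTotalOrder C (OrdRel C)]
    (f : orderedFin 3 ↪[L₀lt] C) :
    triangleColouring f.rangeCopy = if WellOrderingRel (pairClass ![f (0 : Fin 3), f (1 : Fin 3)])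
      (pairClass ![f (0 : Fin 3), f (2 : Fin 3)]) then 0 else 1 := by
  set S := f.rangeCopy
  have h : ⇑(S.1.subtype.comp S.2.some.symm.toEmbedding) = ⇑f := by
    refine Embedding.coe_eq_of_range_eq ?_
    rw [show ⇑(S.1.subtype.comp S.2.some.symm.toEmbedding) = S.1.subtype ∘ S.2.some.symm from rfl,
      (EquivLike.surjective _).range_comp]
    exact (Subtype.range_coe).trans (Hom.range_coe f.toHom)
  dsimp only [triangleColouring]
  rw [h]

lemma exists_triangleColouring_ne_of_orderedFin_four
    (hK : @IsK0Struct C ((LHom.sumInl : L₀ →ᴸ L₀lt).reduct C)) [IsStrictTotalOrder C (OrdRel C)]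
    (B' : L₀lt.Substructure C) (φ : B' ≃[L₀lt] orderedFin 4) :
    ∃ S T : {S : L₀lt.Substructure C // Nonempty (S ≃[L₀lt] orderedFin 3)},
      S.1 ≤ B' ∧ T.1 ≤ B' ∧ triangleColouring S ≠ triangleColouring T := by
  classical
  let p : orderedFin 4 ↪[L₀lt] C := B'.subtype.comp φ.symm.toEmbedding
  let triple (ι : Fin 3 ↪o Fin 4) := (p.comp (orderedFinEmbedding ι)).rangeCopy
  have hle (ι : Fin 3 ↪o Fin 4) : (triple ι).1 ≤ B' := by
    rintro _ ⟨i, rfl⟩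
    exact (φ.symm _).2
  let q : Fin 4 → C := p
  have hrel (a b c d : Fin 4) : PairRel ![q a, q b] ![q c, q d] ↔ EqOrDisjoint ![a, b] ![c, d] :=
    (p.pairRel_iff a b c d).trans (pairRel_orderedFin_iff _ _)
  have h₀₂ : PairRel ![q 0, q 2] ![q 1, q 3] :=
    (hrel _ _ _ _).2 ⟨by decide, by decide, .inr (by simp)⟩
  have h₀₃ : PairRel ![q 0, q 3] ![q 1, q 2] :=
    (hrel _ _ _ _).2 ⟨by decide, by decide, .inr (by simp)⟩
  have hne : pairClass ![q 0, q 2] ≠ pairClass ![q 0, q 3] := by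
    rw [Ne, pairClass_eq_iff hK ((hK 2 two_pos).1 _ _ h₀₃).1, hrel]
    rintro ⟨-, -, h | h⟩
    · simpa using congrArg (2 ∈ ·) h
    · simp at h
  let ι₁ : Fin 3 ↪o Fin 4 := OrderEmbedding.ofStrictMono ![0, 2, 3] (by decide)
  let ι₂ : Fin 3 ↪o Fin 4 := OrderEmbedding.ofStrictMono ![1, 2, 3] (by decide)
  refine ⟨triple ι₁, triple ι₂, hle ι₁, hle ι₂, ?_⟩
  rw [triangleColouring_rangeCopy, triangleColouring_rangeCopy]
  change (if WellOrderingRel (pairClass ![q 0, q 2]) (pairClass ![q 0, q 3]) then (0 : Fin 2)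
      else 1) ≠ if WellOrderingRel (pairClass ![q 1, q 2]) (pairClass ![q 1, q 3]) then 0 else 1
  rw [← (pairClass_eq_iff hK ((hK 2 two_pos).1 _ _ h₀₂).2).2 h₀₂,
    ← (pairClass_eq_iff hK ((hK 2 two_pos).1 _ _ h₀₃).2).2 h₀₃]
  rcases trichotomous_of WellOrderingRel (pairClass ![q 0, q 2]) (pairClass ![q 0, q 3])
    with h | h | h
  · simp [h, asymm h]
  · exact absurd h hne
  · simp [h, asymm h]

end OrderedK₀

section Age

variable {M : Type*} [L₀.Structure M] {r : M → M → Prop} {C : Bundled L₀lt.Structure}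

lemma isK0Struct_reduct_of_mem_age (hage : L₀.age M = K₀) (hC : C ∈ @age L₀lt M (expStr M r)) :
    @IsK0Struct C ((LHom.sumInl : L₀ →ᴸ L₀lt).reduct C) := by
  let := (LHom.sumInl : L₀ →ᴸ L₀lt).reduct C
  let := expStr M r
  obtain ⟨hfg, ⟨e⟩⟩ := hC
  have : Finite C := Structure.fg_iff_finite.1 hfg
  have hmem : (⟨C, inferInstance⟩ : Bundled L₀.Structure) ∈ L₀.age M :=
    ⟨Structure.FG.of_finite,
      ⟨⟨e.toEmbedding, fun {_} f => f.elim, fun {_} R => e.map_rel (Sum.inl R)⟩⟩⟩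
  exact (hage ▸ hmem).2

lemma isStrictTotalOrder_ordRel_of_mem_age [IsStrictTotalOrder M r]
    (hC : C ∈ @age L₀lt M (expStr M r)) : IsStrictTotalOrder C (OrdRel C) := by
  let := expStr M r
  have : IsStrictTotalOrder M (OrdRel M) := ‹IsStrictTotalOrder M r›
  obtain ⟨-, ⟨e⟩⟩ := hC
  exact RelEmbedding.isStrictTotalOrder ⟨e.toEmbedding, fun {a b} => e.ordRel_iff a b⟩

end Age

theorem M0_no_Ramsey_order_general (M₀ : Type) [L₀.Structure M₀]
    (hage : L₀.age M₀ = K₀) :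
    ¬ ∃ r : M₀ → M₀ → Prop, IsStrictTotalOrder M₀ r ∧
        @Language.IsUltrahomogeneous L₀lt M₀ (expStr M₀ r) ∧
        RamseyProperty (@Language.age L₀lt M₀ (expStr M₀ r)) := by
  rintro ⟨r, hr, -, hRam⟩
  obtain ⟨C, hC, hRamC⟩ := hRam _ _ (orderedFin_mem_age hage (m := 3) (by norm_num))
    (orderedFin_mem_age hage (m := 4) le_rfl) 2 two_pos
  have := isStrictTotalOrder_ordRel_of_mem_age hC
  obtain ⟨B', ⟨φ⟩, hmono⟩ := hRamC triangleColouring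
  obtain ⟨S, T, hS, hT, hne⟩ :=
    exists_triangleColouring_ne_of_orderedFin_four (isK0Struct_reduct_of_mem_age hage hC) B' φ
  exact hne (hmono S T hS hT)

/-- there is no strict linear order `<` on `M₀` such that `(M₀, <)` is
ultrahomogeneous and the age of `(M₀, <)` has the Ramsey property. -/
theorem M0_no_Ramsey_order (M₀ : Type) [L₀.Structure M₀] [Countable M₀]
    (hUH : L₀.IsUltrahomogeneous M₀) (hage : L₀.age M₀ = K₀) :
    ¬ ∃ r : M₀ → M₀ → Prop, IsStrictTotalOrder M₀ r ∧
        @Language.IsUltrahomogeneous L₀lt M₀ (expStr M₀ r) ∧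
        RamseyProperty (@Language.age L₀lt M₀ (expStr M₀ r)) :=
  M0_no_Ramsey_order_general M₀ hage
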